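/- arXiv:2507.20075 — 2 statements merged into one kernel-verified Lean document; each statement's English description precedes it below -/
import Mathlib

section
/- Let (x^ε,y^ε,u^ε) and (x*,y*,u*) be admissible triples of the fully coupled FBSΔE and let (p*,r*) solve the adjoint equation along (x*,y*,u*), with q*_k = p*_k·w_{k−1}, p'^*_{k+1} = E[p*_{k+1}|ℱ_{k−1}], q'^*_{k+1} = E[p*_{k+1}w_k|ℱ_{k−1}]. Then the forward duality (summation-by-parts) identity holds: Σ_{k=0}^{N−1}[−⟨b^ε(k)−b*(k), p*_{k+1}⟩ − ⟨σ^ε(k)−σ*(k), q*_{k+1}⟩] = Σ_{k=0}^{N−1}[−⟨x^ε_k−x*_k, H*_x(k)⟩] − ⟨x^ε_N−x*_N, p*_N⟩ + ⟨x^ε_0−x*_0, p*_0⟩, where b^ε(k), σ^ε(k) (resp. b*(k), σ*(k)) denote the coefficients evaluated along (x^ε,y^ε,u^ε) (resp. (x*,y*,u*)), and H*_x(k) is the x-partial derivative of the Hamiltonian at (k, x*_k, y'^*_{k+1}, z'^*_{k+1}, u*_k, p'^*_{k+1}, q'^*_{k+1}, r*_k). -/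
open MeasureTheory Filter Finset Asymptotics ContinuousLinearMap
open scoped RealInnerProductSpace Topology

noncomputable section

/-- `n`-dimensional Euclidean space `ℝⁿ`. -/
abbrev Vec (n : ℕ) : Type := EuclideanSpace ℝ (Fin n)

/-- Data of a controlled fully coupled forward-backward stochastic difference
equation (FBSΔE) on the finite horizon `{0,…,N}`, together with the cost data.
The σ-algebra `F k` plays the role of `ℱ_{k-1}` of the paper (so `F 0 = ℱ_{-1}`
is the trivial σ-algebra and the martingale difference `w k` is
`F (k+1) = ℱ_k`-measurable).  The coefficient `f k` stands for `f(k+1,·)`. -/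
structure FBS (Ω : Type) [MeasurableSpace Ω] (n m : ℕ) where
  ℙ : Measure Ω
  prob : IsProbabilityMeasure ℙ
  N : ℕ
  hN : 0 < N
  F : ℕ → MeasurableSpace Ω
  F_le : ∀ k, F k ≤ ‹MeasurableSpace Ω›
  F_mono : Monotone F
  F_triv : F 0 = ⊥
  w : ℕ → Ω → ℝ
  w_meas : ∀ k, Measurable[F (k + 1)] (w k)
  w_L2 : ∀ k, MemLp (w k) 2 ℙ
  w_mds : ∀ k, MeasureTheory.condExp (F k) ℙ (w k) =ᵐ[ℙ] 0
  w_var : ∀ k, MeasureTheory.condExp (F k) ℙ (fun ω => (w k ω) ^ 2) =ᵐ[ℙ] 1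
  U : ℕ → Set (Vec m)
  U_ne : ∀ k, (U k).Nonempty
  U_convex : ∀ k, Convex ℝ (U k)
  b : ℕ → Ω → Vec n → Vec n → Vec n → Vec m → Vec n
  σ : ℕ → Ω → Vec n → Vec n → Vec n → Vec m → Vec n
  f : ℕ → Ω → Vec n → Vec n → Vec n → Vec m → Vec n
  l : ℕ → Ω → Vec n → Vec n → Vec n → Vec m → ℝ
  Λ : Vec n → Vec n
  Φ : Ω → Vec n → Vec n
  φ : Ω → Vec n → ℝ
  γ : Vec n → ℝ

namespace FBS

variable {Ω : Type} [MeasurableSpace Ω] {n m : ℕ}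

/-- `y'_{k+1} = E[y_{k+1} ∣ ℱ_{k-1}]`. -/
def yc (S : FBS Ω n m) (y : ℕ → Ω → Vec n) (k : ℕ) : Ω → Vec n :=
  MeasureTheory.condExp (S.F k) S.ℙ (y (k + 1))

/-- `z'_{k+1} = E[y_{k+1}·w_k ∣ ℱ_{k-1}]`. -/
def zc (S : FBS Ω n m) (y : ℕ → Ω → Vec n) (k : ℕ) : Ω → Vec n :=
  MeasureTheory.condExp (S.F k) S.ℙ (fun ω => S.w k ω • y (k + 1) ω)

/-- `p'_{k+1} = E[p_{k+1} ∣ ℱ_{k-1}]`. -/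
def pc (S : FBS Ω n m) (p : ℕ → Ω → Vec n) (k : ℕ) : Ω → Vec n :=
  MeasureTheory.condExp (S.F k) S.ℙ (p (k + 1))

/-- `q'_{k+1} = E[p_{k+1}·w_k ∣ ℱ_{k-1}]`. -/
def qc (S : FBS Ω n m) (p : ℕ → Ω → Vec n) (k : ℕ) : Ω → Vec n :=
  MeasureTheory.condExp (S.F k) S.ℙ (fun ω => S.w k ω • p (k + 1) ω)

/-- Admissibility of a control: `u_k` is `ℱ_{k-1}`-measurable, `U_k`-valued and
square integrable. -/
def Admissible (S : FBS Ω n m) (u : ℕ → Ω → Vec m) : Prop :=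
  (∀ k, StronglyMeasurable[S.F k] (u k)) ∧
  (∀ k ω, u k ω ∈ S.U k) ∧ (∀ k, MemLp (u k) 2 S.ℙ)

/-- `(x,y)` is a square integrable solution of the fully coupled FBSΔE
associated with the control `u`. -/
def IsSolution (S : FBS Ω n m) (u : ℕ → Ω → Vec m) (x y : ℕ → Ω → Vec n) : Prop :=
  (∀ k, MemLp (x k) 2 S.ℙ) ∧ (∀ k, MemLp (y k) 2 S.ℙ) ∧
  (∀ k < S.N, ∀ᵐ ω ∂S.ℙ,
    x (k + 1) ω =
      S.b k ω (x k ω) (S.yc y k ω) (S.zc y k ω) (u k ω) +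
        S.w k ω • S.σ k ω (x k ω) (S.yc y k ω) (S.zc y k ω) (u k ω)) ∧
  (∀ k < S.N, ∀ᵐ ω ∂S.ℙ,
    y k ω = - S.f k ω (x k ω) (S.yc y k ω) (S.zc y k ω) (u k ω)) ∧
  (∀ᵐ ω ∂S.ℙ, x 0 ω = S.Λ (y 0 ω)) ∧
  (∀ᵐ ω ∂S.ℙ, y S.N ω = S.Φ ω (x S.N ω))

/-- The Hamiltonian
`H(k,x,y,z,u,p,q,r) = ⟨b,p⟩ + ⟨σ,q⟩ + ⟨f(k+1,·),r⟩ + l`. -/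
def H (S : FBS Ω n m) (k : ℕ) (ω : Ω) (x y z : Vec n) (u : Vec m)
    (p q r : Vec n) : ℝ :=
  ⟪S.b k ω x y z u, p⟫ + ⟪S.σ k ω x y z u, q⟫ + ⟪S.f k ω x y z u, r⟫ +
    S.l k ω x y z u

/-- `H*_x(k)`: the gradient of the Hamiltonian in `x` along a trajectory. -/
def Hx (S : FBS Ω n m) (u : ℕ → Ω → Vec m) (x y p r : ℕ → Ω → Vec n)
    (k : ℕ) (ω : Ω) : Vec n :=
  gradient (fun ξ => S.H k ω ξ (S.yc y k ω) (S.zc y k ω) (u k ω)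
    (S.pc p k ω) (S.qc p k ω) (r k ω)) (x k ω)

/-- `H*_y(k)`. -/
def Hy (S : FBS Ω n m) (u : ℕ → Ω → Vec m) (x y p r : ℕ → Ω → Vec n)
    (k : ℕ) (ω : Ω) : Vec n :=
  gradient (fun η => S.H k ω (x k ω) η (S.zc y k ω) (u k ω)
    (S.pc p k ω) (S.qc p k ω) (r k ω)) (S.yc y k ω)

/-- `H*_z(k)`. -/
def Hz (S : FBS Ω n m) (u : ℕ → Ω → Vec m) (x y p r : ℕ → Ω → Vec n)
    (k : ℕ) (ω : Ω) : Vec n :=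
  gradient (fun ζ => S.H k ω (x k ω) (S.yc y k ω) ζ (u k ω)
    (S.pc p k ω) (S.qc p k ω) (r k ω)) (S.zc y k ω)

/-- `H*_u(k)`. -/
def Hu (S : FBS Ω n m) (u : ℕ → Ω → Vec m) (x y p r : ℕ → Ω → Vec n)
    (k : ℕ) (ω : Ω) : Vec m :=
  gradient (fun v => S.H k ω (x k ω) (S.yc y k ω) (S.zc y k ω) v
    (S.pc p k ω) (S.qc p k ω) (r k ω)) (u k ω)

/-- `(p,r)` solves the adjoint equation along the admissible triple `(u,x,y)`:
`r_{k+1} = −H_y(k) − H_z(k)·w_k`, `p_k = H_x(k)`,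
`r_0 = −γ_y(y_0) − Λ_y(y_0)ᵀ p_0`, `p_N = φ_x(x_N) − Φ_x(x_N)ᵀ r_N`. -/
def IsAdjoint (S : FBS Ω n m) (u : ℕ → Ω → Vec m) (x y p r : ℕ → Ω → Vec n) : Prop :=
  (∀ k, MemLp (p k) 2 S.ℙ) ∧ (∀ k, MemLp (r k) 2 S.ℙ) ∧
  (∀ k < S.N, ∀ᵐ ω ∂S.ℙ,
    r (k + 1) ω = - S.Hy u x y p r k ω - S.w k ω • S.Hz u x y p r k ω) ∧
  (∀ k < S.N, ∀ᵐ ω ∂S.ℙ, p k ω = S.Hx u x y p r k ω) ∧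
  (∀ᵐ ω ∂S.ℙ, r 0 ω = - gradient S.γ (y 0 ω) -
    ContinuousLinearMap.adjoint (fderiv ℝ S.Λ (y 0 ω)) (p 0 ω)) ∧
  (∀ᵐ ω ∂S.ℙ, p S.N ω = gradient (S.φ ω) (x S.N ω) -
    ContinuousLinearMap.adjoint (fderiv ℝ (S.Φ ω) (x S.N ω)) (r S.N ω))

/-- The cost functional `J(u) = E[φ(x_N) + γ(y_0) + Σ_{k<N} l(k,x_k,y'_{k+1},z'_{k+1},u_k)]`. -/
def J (S : FBS Ω n m) (u : ℕ → Ω → Vec m) (x y : ℕ → Ω → Vec n) : ℝ :=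
  ∫ ω, (S.φ ω (x S.N ω) + S.γ (y 0 ω) +
    ∑ k ∈ Finset.range S.N,
      S.l k ω (x k ω) (S.yc y k ω) (S.zc y k ω) (u k ω)) ∂S.ℙ

/-- The convex (spike) perturbation `u^ε_k = u*_k + δ_{ks}·ε·(u_k − u*_k)`. -/
def pert (ustar u : ℕ → Ω → Vec m) (s : ℕ) (ε : ℝ) : ℕ → Ω → Vec m :=
  fun k ω => ustar k ω + (if k = s then ε • (u k ω - ustar k ω) else 0)

/-- Assumption A1 : measurability, square integrability at the origin,
differentiability with uniformly bounded derivatives of `b, σ, f`, quadratic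
growth of `l` with linear-growth derivatives, and differentiability with
linear-growth derivatives of `φ, Φ, γ, Λ`. -/
structure A1 (S : FBS Ω n m) : Prop where
  b_meas : ∀ (k : ℕ) (x y z : Vec n) (u : Vec m),
    StronglyMeasurable[S.F k] fun ω => S.b k ω x y z u
  σ_meas : ∀ (k : ℕ) (x y z : Vec n) (u : Vec m),
    StronglyMeasurable[S.F k] fun ω => S.σ k ω x y z u
  f_meas : ∀ (k : ℕ) (x y z : Vec n) (u : Vec m),
    StronglyMeasurable[S.F k] fun ω => S.f k ω x y z u
  b_zero : ∀ k, MemLp (fun ω => S.b k ω 0 0 0 0) 2 S.ℙ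
  σ_zero : ∀ k, MemLp (fun ω => S.σ k ω 0 0 0 0) 2 S.ℙ
  f_zero : ∀ k, MemLp (fun ω => S.f k ω 0 0 0 0) 2 S.ℙ
  b_diff : ∀ (k : ℕ) (ω : Ω), Differentiable ℝ
    fun θ : Vec n × Vec n × Vec n × Vec m => S.b k ω θ.1 θ.2.1 θ.2.2.1 θ.2.2.2
  σ_diff : ∀ (k : ℕ) (ω : Ω), Differentiable ℝ
    fun θ : Vec n × Vec n × Vec n × Vec m => S.σ k ω θ.1 θ.2.1 θ.2.2.1 θ.2.2.2
  f_diff : ∀ (k : ℕ) (ω : Ω), Differentiable ℝ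
    fun θ : Vec n × Vec n × Vec n × Vec m => S.f k ω θ.1 θ.2.1 θ.2.2.1 θ.2.2.2
  deriv_bdd : ∃ C > (0:ℝ), ∀ (k : ℕ) (ω : Ω) (θ : Vec n × Vec n × Vec n × Vec m),
    ‖fderiv ℝ (fun θ : Vec n × Vec n × Vec n × Vec m =>
        S.b k ω θ.1 θ.2.1 θ.2.2.1 θ.2.2.2) θ‖ ≤ C ∧
    ‖fderiv ℝ (fun θ : Vec n × Vec n × Vec n × Vec m =>
        S.σ k ω θ.1 θ.2.1 θ.2.2.1 θ.2.2.2) θ‖ ≤ C ∧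
    ‖fderiv ℝ (fun θ : Vec n × Vec n × Vec n × Vec m =>
        S.f k ω θ.1 θ.2.1 θ.2.2.1 θ.2.2.2) θ‖ ≤ C
  l_diff : ∀ (k : ℕ) (ω : Ω), Differentiable ℝ
    fun θ : Vec n × Vec n × Vec n × Vec m => S.l k ω θ.1 θ.2.1 θ.2.2.1 θ.2.2.2
  l_growth : ∃ C > (0:ℝ), ∀ (k : ℕ) (ω : Ω) (x y z : Vec n) (u : Vec m),
    |S.l k ω x y z u| ≤ C * (1 + ‖x‖ ^ 2 + ‖y‖ ^ 2 + ‖z‖ ^ 2 + ‖u‖ ^ 2) ∧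
    ‖fderiv ℝ (fun θ : Vec n × Vec n × Vec n × Vec m =>
        S.l k ω θ.1 θ.2.1 θ.2.2.1 θ.2.2.2) (x, y, z, u)‖ ≤
      C * (1 + ‖x‖ + ‖y‖ + ‖z‖ + ‖u‖)
  φ_diff : ∀ ω, Differentiable ℝ (S.φ ω)
  Φ_diff : ∀ ω, Differentiable ℝ (S.Φ ω)
  γ_diff : Differentiable ℝ S.γ
  Λ_diff : Differentiable ℝ S.Λ
  bdry_growth : ∃ C > (0:ℝ), ∀ (ω : Ω) (x y : Vec n),
    ‖gradient (S.φ ω) x‖ ≤ C * (1 + ‖x‖) ∧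
    ‖fderiv ℝ (S.Φ ω) x‖ ≤ C * (1 + ‖x‖) ∧
    ‖gradient S.γ y‖ ≤ C * (1 + ‖y‖) ∧
    ‖fderiv ℝ S.Λ y‖ ≤ C * (1 + ‖y‖)

/-- Assumption A2 : the domination–monotonicity condition of Yu's framework. -/
def A2 (S : FBS Ω n m) : Prop :=
  ∃ (μ v : ℝ) (M : Vec n →L[ℝ] Vec n) (G : Ω → Vec n →L[ℝ] Vec n)
    (A B C : ℕ → Ω → Vec n →L[ℝ] Vec n),
    ((0 < μ ∧ v = 0) ∨ (μ = 0 ∧ 0 < v)) ∧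
    (∃ Cb : ℝ, ∀ (k : ℕ) (ω : Ω),
      ‖G ω‖ ≤ Cb ∧ ‖A k ω‖ ≤ Cb ∧ ‖B k ω‖ ≤ Cb ∧ ‖C k ω‖ ≤ Cb) ∧
    -- domination conditions
    (∀ y yb : Vec n, μ * ‖S.Λ y - S.Λ yb‖ ≤ ‖M (y - yb)‖) ∧
    (∀ (ω : Ω) (x xb : Vec n), v * ‖S.Φ ω x - S.Φ ω xb‖ ≤ ‖G ω (x - xb)‖) ∧
    (∀ (k : ℕ) (ω : Ω) (x xb y z : Vec n) (u : Vec m),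
      v * ‖S.f k ω x y z u - S.f k ω xb y z u‖ ≤ ‖A k ω (x - xb)‖) ∧
    (∀ (k : ℕ) (ω : Ω) (x y yb z zb : Vec n) (u : Vec m),
      μ * ‖S.b k ω x y z u - S.b k ω x yb zb u‖ ≤ ‖B k ω (y - yb) + C k ω (z - zb)‖) ∧
    (∀ (k : ℕ) (ω : Ω) (x y yb z zb : Vec n) (u : Vec m),
      μ * ‖S.σ k ω x y z u - S.σ k ω x yb zb u‖ ≤ ‖B k ω (y - yb) + C k ω (z - zb)‖) ∧
    -- monotonicity conditions: Case 1 or Case 2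
    (((∀ y yb : Vec n, ⟪S.Λ y - S.Λ yb, y - yb⟫ ≤ -(μ * ‖M (y - yb)‖ ^ 2)) ∧
      (∀ (ω : Ω) (x xb : Vec n),
        v * ‖G ω (x - xb)‖ ^ 2 ≤ ⟪S.Φ ω x - S.Φ ω xb, x - xb⟫) ∧
      (∀ (k : ℕ) (ω : Ω) (x xb y yb z zb : Vec n) (u : Vec m),
        ⟪S.f k ω x y z u - S.f k ω xb yb zb u, x - xb⟫ +
          ⟪S.b k ω x y z u - S.b k ω xb yb zb u, y - yb⟫ +
          ⟪S.σ k ω x y z u - S.σ k ω xb yb zb u, z - zb⟫ ≤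
        -(v * ‖A k ω (x - xb)‖ ^ 2) - μ * ‖B k ω (y - yb) + C k ω (z - zb)‖ ^ 2)) ∨
     ((∀ y yb : Vec n, μ * ‖M (y - yb)‖ ^ 2 ≤ ⟪S.Λ y - S.Λ yb, y - yb⟫) ∧
      (∀ (ω : Ω) (x xb : Vec n),
        ⟪S.Φ ω x - S.Φ ω xb, x - xb⟫ ≤ -(v * ‖G ω (x - xb)‖ ^ 2)) ∧
      (∀ (k : ℕ) (ω : Ω) (x xb y yb z zb : Vec n) (u : Vec m),
        v * ‖A k ω (x - xb)‖ ^ 2 + μ * ‖B k ω (y - yb) + C k ω (z - zb)‖ ^ 2 ≤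
          ⟪S.f k ω x y z u - S.f k ω xb yb zb u, x - xb⟫ +
            ⟪S.b k ω x y z u - S.b k ω xb yb zb u, y - yb⟫ +
            ⟪S.σ k ω x y z u - S.σ k ω xb yb zb u, z - zb⟫)))

/-! Substituting the forward equations of `x^ε` and `x*`, the `k`-th summand on the left becomes
`-⟨x^ε_{k+1} - x*_{k+1}, p*_{k+1}⟩`, and by the adjoint equation `p*_k = H*_x(k)` the
identity is then a telescoping sum (discrete summation by parts). -/

section SummationByParts

variable {E : Type*} [NormedAddCommGroup E] [InnerProductSpace ℝ E]

theorem _root_.inner_sub_add_inner_sub_smul (b b' σ σ' p : E) (w : ℝ) :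
    ⟪b - b', p⟫ + ⟪σ - σ', w • p⟫ = ⟪b + w • σ - (b' + w • σ'), p⟫ := by
  simp only [inner_sub_left, inner_add_left, real_inner_smul_left, real_inner_smul_right]
  ring

theorem _root_.Finset.sum_range_neg_inner_succ (a p : ℕ → E) (N : ℕ) :
    ∑ k ∈ range N, -⟪a (k + 1), p (k + 1)⟫ =
      ∑ k ∈ range N, -⟪a k, p k⟫ - ⟪a N, p N⟫ + ⟪a 0, p 0⟫ := by
  have htelescope := sum_range_sub (fun k => ⟪a k, p k⟫) N
  rw [sum_sub_distrib] at htelescope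
  simp only [sum_neg_distrib]
  linarith

end SummationByParts

theorem stmt3_general (S : FBS Ω n m)
    (ue ustar : ℕ → Ω → Vec m) (xe ye xstar ystar p r : ℕ → Ω → Vec n)
    (hsole : S.IsSolution ue xe ye) (hsol : S.IsSolution ustar xstar ystar)
    (hadj : S.IsAdjoint ustar xstar ystar p r) :
    ∀ᵐ ω ∂S.ℙ,
      (∑ k ∈ Finset.range S.N,
        (-⟪S.b k ω (xe k ω) (S.yc ye k ω) (S.zc ye k ω) (ue k ω) -
              S.b k ω (xstar k ω) (S.yc ystar k ω) (S.zc ystar k ω) (ustar k ω),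
            p (k + 1) ω⟫ -
          ⟪S.σ k ω (xe k ω) (S.yc ye k ω) (S.zc ye k ω) (ue k ω) -
              S.σ k ω (xstar k ω) (S.yc ystar k ω) (S.zc ystar k ω) (ustar k ω),
            S.w k ω • p (k + 1) ω⟫)) =
      (∑ k ∈ Finset.range S.N,
          -⟪xe k ω - xstar k ω, S.Hx ustar xstar ystar p r k ω⟫) -
        ⟪xe S.N ω - xstar S.N ω, p S.N ω⟫ + ⟪xe 0 ω - xstar 0 ω, p 0 ω⟫ := by
  obtain ⟨-, -, hxe, -, -, -⟩ := hsole
  obtain ⟨-, -, hxs, -, -, -⟩ := hsol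
  obtain ⟨-, -, -, hp, -, -⟩ := hadj
  filter_upwards [(eventually_all_finset (range S.N)).2 fun k hk =>
    (hxe k (mem_range.1 hk)).and ((hxs k (mem_range.1 hk)).and (hp k (mem_range.1 hk)))]
    with ω h
  calc _ = ∑ k ∈ range S.N, -⟪xe (k + 1) ω - xstar (k + 1) ω, p (k + 1) ω⟫ := by
        refine sum_congr rfl fun k hk => ?_
        rw [(h k hk).1, (h k hk).2.1, ← inner_sub_add_inner_sub_smul, neg_add']
    _ = ∑ k ∈ range S.N, -⟪xe k ω - xstar k ω, p k ω⟫ -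
          ⟪xe S.N ω - xstar S.N ω, p S.N ω⟫ + ⟪xe 0 ω - xstar 0 ω, p 0 ω⟫ :=
        sum_range_neg_inner_succ (fun k => xe k ω - xstar k ω) (fun k => p k ω) S.N
    _ = _ := by
        congr 2
        exact sum_congr rfl fun k hk => by rw [(h k hk).2.2]

/-- forward duality / summation-by-parts identity.  For
admissible triples `(x^ε,y^ε,u^ε)` and `(x*,y*,u*)` of the fully coupled FBSΔE
and an adjoint solution `(p*,r*)` along `(x*,y*,u*)` (with `q*_{k+1} =
p*_{k+1}·w_k`), almost surely
`Σ_{k<N}[−⟨b^ε(k)−b*(k), p*_{k+1}⟩ − ⟨σ^ε(k)−σ*(k), q*_{k+1}⟩]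
  = Σ_{k<N}[−⟨x^ε_k−x*_k, H*_x(k)⟩] − ⟨x^ε_N−x*_N, p*_N⟩ + ⟨x^ε_0−x*_0, p*_0⟩`. -/
theorem stmt3 (S : FBS Ω n m) (hA1 : S.A1)
    (ue ustar : ℕ → Ω → Vec m) (xe ye xstar ystar p r : ℕ → Ω → Vec n)
    (hue : S.Admissible ue) (hustar : S.Admissible ustar)
    (hsole : S.IsSolution ue xe ye) (hsol : S.IsSolution ustar xstar ystar)
    (hadj : S.IsAdjoint ustar xstar ystar p r) :
    ∀ᵐ ω ∂S.ℙ,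
      (∑ k ∈ Finset.range S.N,
        (-⟪S.b k ω (xe k ω) (S.yc ye k ω) (S.zc ye k ω) (ue k ω) -
              S.b k ω (xstar k ω) (S.yc ystar k ω) (S.zc ystar k ω) (ustar k ω),
            p (k + 1) ω⟫ -
          ⟪S.σ k ω (xe k ω) (S.yc ye k ω) (S.zc ye k ω) (ue k ω) -
              S.σ k ω (xstar k ω) (S.yc ystar k ω) (S.zc ystar k ω) (ustar k ω),
            S.w k ω • p (k + 1) ω⟫)) =
      (∑ k ∈ Finset.range S.N,
          -⟪xe k ω - xstar k ω, S.Hx ustar xstar ystar p r k ω⟫) -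
        ⟪xe S.N ω - xstar S.N ω, p S.N ω⟫ + ⟪xe 0 ω - xstar 0 ω, p 0 ω⟫ :=
  stmt3_general S ue ustar xe ye xstar ystar p r hsole hsol hadj

end FBS
end
end

section
/- Let (x^ε,y^ε,u^ε) and (x*,y*,u*) be admissible triples of the fully coupled FBSΔE and let (p*,r*) solve the adjoint equation along (x*,y*,u*), with q*_k = p*_k·w_{k−1}, p'^*_{k+1} = E[p*_{k+1}|ℱ_{k−1}], q'^*_{k+1} = E[p*_{k+1}w_k|ℱ_{k−1}]. Then the backward duality identity holds: Σ_{k=0}^{N−1}[−⟨f^ε(k+1)−f*(k+1), r*_k⟩] = Σ_{k=0}^{N−1}[−⟨y^ε_{k+1}−y*_{k+1}, H*_y(k)⟩ − ⟨z^ε_{k+1}−z*_{k+1}, H*_z(k)⟩] − ⟨y^ε_N−y*_N, r*_N⟩ + ⟨y^ε_0−y*_0, r*_0⟩, where f^ε(k+1), f*(k+1) denote f evaluated along (x^ε,y^ε,u^ε) and (x*,y*,u*) respectively, z_k = y_k·w_{k−1}, and H*_y(k), H*_z(k) are the y- and z-partial derivatives of the Hamiltonian at (k, x*_k, y'^*_{k+1},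 z'^*_{k+1}, u*_k, p'^*_{k+1}, q'^*_{k+1}, r*_k). -/
open MeasureTheory Filter Finset Asymptotics ContinuousLinearMap
open scoped RealInnerProductSpace Topology

noncomputable section

/-!
With `Δy = y^ε - y*`, the backward equation `y_k = -f(k+1, …)` turns the left side into
`Σ_{k<N} ⟨Δy_k, r_k⟩`, and the adjoint recursion `r_{k+1} = -H_y(k) - H_z(k) w_k` turns each
summand on the right into `⟨Δy_{k+1}, r_{k+1}⟩`; the identity is then a telescoping sum, holding
pathwise off a null set.
-/

theorem MeasureTheory.ae_forall_lt {α : Type*} [MeasurableSpace α] {μ : Measure α} {N : ℕ}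
    {P : ℕ → α → Prop} (h : ∀ k < N, ∀ᵐ a ∂μ, P k a) : ∀ᵐ a ∂μ, ∀ k < N, P k a :=
  ae_all_iff.2 fun k => eventually_imp_distrib_left.2 (h k)

theorem Finset.sum_range_eq_sum_range_succ_sub_add {G : Type*} [AddCommGroup G]
    (g : ℕ → G) (N : ℕ) :
    ∑ k ∈ range N, g k = ∑ k ∈ range N, g (k + 1) - g N + g 0 := by
  rw [sub_add, ← sum_range_sub, sum_sub_distrib, sub_sub_cancel]

theorem real_inner_neg_sub_smul_right {E : Type*} [NormedAddCommGroup E]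
    [InnerProductSpace ℝ E] (d u v : E) (c : ℝ) :
    ⟪d, -u - c • v⟫ = -⟪d, u⟫ - ⟪c • d, v⟫ := by
  rw [inner_sub_right, inner_neg_right, real_inner_smul_right, real_inner_smul_left]

namespace FBS

variable {Ω : Type} [MeasurableSpace Ω] {n m : ℕ}

theorem IsSolution.ae_f_eq_neg {S : FBS Ω n m} {u : ℕ → Ω → Vec m} {x y : ℕ → Ω → Vec n}
    (h : S.IsSolution u x y) :
    ∀ᵐ ω ∂S.ℙ, ∀ k < S.N,
      S.f k ω (x k ω) (S.yc y k ω) (S.zc y k ω) (u k ω) = -y k ω :=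
  ae_forall_lt fun k hk => (h.2.2.2.1 k hk).mono fun ω hy => by rw [hy, neg_neg]

theorem IsAdjoint.ae_r_succ {S : FBS Ω n m} {u : ℕ → Ω → Vec m} {x y p r : ℕ → Ω → Vec n}
    (h : S.IsAdjoint u x y p r) :
    ∀ᵐ ω ∂S.ℙ, ∀ k < S.N,
      r (k + 1) ω = -S.Hy u x y p r k ω - S.w k ω • S.Hz u x y p r k ω :=
  ae_forall_lt h.2.2.1

theorem stmt4_general (S : FBS Ω n m)
    (ue ustar : ℕ → Ω → Vec m) (xe ye xstar ystar p r : ℕ → Ω → Vec n)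
    (hsole : S.IsSolution ue xe ye) (hsol : S.IsSolution ustar xstar ystar)
    (hadj : S.IsAdjoint ustar xstar ystar p r) :
    ∀ᵐ ω ∂S.ℙ,
      (∑ k ∈ Finset.range S.N,
        -⟪S.f k ω (xe k ω) (S.yc ye k ω) (S.zc ye k ω) (ue k ω) -
            S.f k ω (xstar k ω) (S.yc ystar k ω) (S.zc ystar k ω) (ustar k ω),
          r k ω⟫) =
      (∑ k ∈ Finset.range S.N,
        (-⟪ye (k + 1) ω - ystar (k + 1) ω, S.Hy ustar xstar ystar p r k ω⟫ -
          ⟪S.w k ω • ye (k + 1) ω - S.w k ω • ystar (k + 1) ω,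
            S.Hz ustar xstar ystar p r k ω⟫)) -
        ⟪ye S.N ω - ystar S.N ω, r S.N ω⟫ + ⟪ye 0 ω - ystar 0 ω, r 0 ω⟫ := by
  filter_upwards [hsole.ae_f_eq_neg, hsol.ae_f_eq_neg, hadj.ae_r_succ] with ω hfe hfstar hr
  set g : ℕ → ℝ := fun k => ⟪ye k ω - ystar k ω, r k ω⟫
  calc
    _ = ∑ k ∈ range S.N, g k := sum_congr rfl fun k hk => by
          rw [hfe k (mem_range.1 hk), hfstar k (mem_range.1 hk), neg_sub_neg, ← inner_neg_left,
            neg_sub]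
    _ = ∑ k ∈ range S.N, g (k + 1) - g S.N + g 0 := sum_range_eq_sum_range_succ_sub_add g S.N
    _ = _ := by
      congr 2
      refine sum_congr rfl fun k hk => ?_
      rw [← smul_sub, ← real_inner_neg_sub_smul_right, ← hr k (mem_range.1 hk)]

/-- backward duality identity.  For admissible triples
`(x^ε,y^ε,u^ε)` and `(x*,y*,u*)` of the fully coupled FBSΔE and an adjoint
solution `(p*,r*)` along `(x*,y*,u*)`, with `z_{k+1} = y_{k+1}·w_k`, almost
surely
`Σ_{k<N}[−⟨f^ε(k+1)−f*(k+1), r*_k⟩]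
  = Σ_{k<N}[−⟨y^ε_{k+1}−y*_{k+1}, H*_y(k)⟩ − ⟨z^ε_{k+1}−z*_{k+1}, H*_z(k)⟩]
      − ⟨y^ε_N−y*_N, r*_N⟩ + ⟨y^ε_0−y*_0, r*_0⟩`. -/
theorem stmt4 (S : FBS Ω n m) (hA1 : S.A1)
    (ue ustar : ℕ → Ω → Vec m) (xe ye xstar ystar p r : ℕ → Ω → Vec n)
    (hue : S.Admissible ue) (hustar : S.Admissible ustar)
    (hsole : S.IsSolution ue xe ye) (hsol : S.IsSolution ustar xstar ystar)
    (hadj : S.IsAdjoint ustar xstar ystar p r) :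
    ∀ᵐ ω ∂S.ℙ,
      (∑ k ∈ Finset.range S.N,
        -⟪S.f k ω (xe k ω) (S.yc ye k ω) (S.zc ye k ω) (ue k ω) -
            S.f k ω (xstar k ω) (S.yc ystar k ω) (S.zc ystar k ω) (ustar k ω),
          r k ω⟫) =
      (∑ k ∈ Finset.range S.N,
        (-⟪ye (k + 1) ω - ystar (k + 1) ω, S.Hy ustar xstar ystar p r k ω⟫ -
          ⟪S.w k ω • ye (k + 1) ω - S.w k ω • ystar (k + 1) ω,
            S.Hz ustar xstar ystar p r k ω⟫)) -
        ⟪ye S.N ω - ystar S.N ω, r S.N ω⟫ + ⟪ye 0 ω - ystar 0 ω, r 0 ω⟫ :=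
  stmt4_general S ue ustar xe ye xstar ystar p r hsole hsol hadj

end FBS
end
end
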